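/- Let k be an even integer with k ≥ 4, let d = (3k+4)/2, and let C be a symmetric (d,k) circuit code of length 4k+6 whose transition sequence has the form T(C) = (ω₁, x, ω₂, ω₁, x, ω₂), where ω₁ = (1,2,...,k+2) and ω₂ = (β₁,...,β_k). If x ∈ {1,2} and β₂ = 3, then either the segment (4,5,...,k+2, x, β₁, β₂, β₃) is a bit run of length k+3, or β₃ = 5 and the segment (β₄,...,β_k, 1, 2, 3, 4, 5, 6) is a bit run of length k+3. -/

import Mathlib

/-- The graph of the `d`-dimensional hypercube: vertices are binary vectors of
length `d`, adjacent iff they differ in exactly one coordinate. -/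
def hypercube (d : ℕ) : SimpleGraph (Fin d → Bool) where
  Adj x y := hammingDist x y = 1
  symm := by
    constructor
    intro x y h
    rwa [hammingDist_comm]
  loopless := by
    constructor
    intro x h
    simp [hammingDist_self] at h

/-- Distance along a cycle of length `N` between positions `i` and `j`. -/
def cycDist {N : ℕ} (i j : ZMod N) : ℕ := min (i - j).val (j - i).val

/-- `x : ZMod N → (Fin d → Bool)` is a `(d,k)` circuit code of length `N`:
a cycle in the hypercube `I(d)` satisfying the spread-`k` distance requirement. -/
structure IsCircuitCode (d k N : ℕ) (x : ZMod N → Fin d → Bool) : Prop where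
  inj : Function.Injective x
  adj : ∀ i : ZMod N, (hypercube d).Adj (x i) (x (i + 1))
  spread : ∀ i j : ZMod N, min (cycDist i j) k ≤ (hypercube d).dist (x i) (x j)

/-- `τ` is the transition sequence of the cycle `x`: `τ i` is the unique
coordinate in which `x i` and `x (i+1)` differ. -/
def IsTransitionSeq {d N : ℕ} (x : ZMod N → Fin d → Bool) (τ : ZMod N → Fin d) : Prop :=
  ∀ (i : ZMod N) (j : Fin d), x (i + 1) j ≠ x i j ↔ j = τ i

/-- The segment of `τ` of length `m` starting at position `start` is a bit run:
all of its entries are distinct. -/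
def IsBitRun {d N : ℕ} (τ : ZMod N → Fin d) (start : ZMod N) (m : ℕ) : Prop :=
  ∀ a b : Fin m, τ (start + ((a : ℕ) : ZMod N)) = τ (start + ((b : ℕ) : ZMod N)) → a = b

/-- `δ(ω)`: the number of coordinates appearing an odd number of times in the
segment of `τ` of length `m` starting at `start`. -/
def segDelta {d N : ℕ} (τ : ZMod N → Fin d) (start : ZMod N) (m : ℕ) : ℕ :=
  (Finset.univ.filter fun c : Fin d =>
    Odd (Finset.univ.filter fun t : Fin m => τ (start + ((t : ℕ) : ZMod N)) = c).card).card

/-!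
Along the cycle, `x i` and `x (i + m)` differ exactly in the coordinates occurring an odd number
of times among `τ i, …, τ (i + m - 1)`. For `2 m ≤ N` the spread condition therefore demands at
least `min m k` such coordinates, while each value repeated in the window takes at least two of
the `m` entries out of that count. So no value repeats within distance `k`, at most one value
repeats in a window of length `k + 3`, and at most two in a window of length `k + 5`. Together
with the symmetry `τ (i + 2k + 3) = τ i`, `ω₁ = (1, …, k + 2)` and `β₂ = 3`, these first exclude
`β₃ = 4` (then `3` and `4` would both repeat in the window starting at `β₂`), and then every
repeat left in the two candidate segments, according to whether `β₃ = 5`. (These values are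
the paper's 1-based coordinates; in the code coordinate `c` is `c - 1`.)
-/

open Finset

lemma hammingDist_update_add_one {ι β : Type*} [Fintype ι] [DecidableEq ι] [DecidableEq β]
    {a b : ι → β} {j : ι} (h : a j ≠ b j) :
    hammingDist (Function.update a j (b j)) b + 1 = hammingDist a b := by
  have hfilter : ({i | Function.update a j (b j) i ≠ b i} : Finset ι) =
      ({i | a i ≠ b i} : Finset ι).erase j := by
    ext t
    by_cases htj : t = j <;> simp [htj, Function.update_apply]
  rw [hammingDist, hammingDist, hfilter, card_erase_add_one (by simpa using h)]

lemma hypercube_adj_update {d : ℕ} (a : Fin d → Bool) {j : Fin d} {v : Bool} (h : a j ≠ v) :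
    (hypercube d).Adj a (Function.update a j v) := by
  change #{i | a i ≠ Function.update a j v i} = 1
  rw [card_eq_one]
  refine ⟨j, ?_⟩
  ext t
  by_cases htj : t = j <;> simp [htj, Function.update_apply, h]

lemma exists_walk_length_eq_hammingDist {d : ℕ} (a b : Fin d → Bool) :
    ∃ p : (hypercube d).Walk a b, p.length = hammingDist a b := by
  induction h : hammingDist a b generalizing a with
  | zero =>
    rw [hammingDist_eq_zero] at h
    exact h ▸ ⟨.nil, rfl⟩
  | succ n ih =>
    obtain ⟨j, hj⟩ : ∃ j, a j ≠ b j :=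
      Function.ne_iff.mp (hammingDist_ne_zero.mp (by omega))
    obtain ⟨p, hp⟩ := ih (Function.update a j (b j))
      (by have := hammingDist_update_add_one hj; omega)
    exact ⟨.cons (hypercube_adj_update a hj) p, by simp [hp]⟩

lemma hypercube_dist_le_hammingDist {d : ℕ} (a b : Fin d → Bool) :
    (hypercube d).dist a b ≤ hammingDist a b := by
  obtain ⟨p, hp⟩ := exists_walk_length_eq_hammingDist a b
  exact hp ▸ SimpleGraph.dist_le p

lemma IsTransitionSeq.ne_iff_odd_card {d N : ℕ} {x : ZMod N → Fin d → Bool}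
    {τ : ZMod N → Fin d} (hτ : IsTransitionSeq x τ) (i : ZMod N) (j : Fin d) (m : ℕ) :
    x (i + m) j ≠ x i j ↔ Odd #{t : Fin m | τ (i + (t : ℕ)) = j} := by
  induction m generalizing i with
  | zero => simp
  | succ m ih =>
    have hshift : ∀ t : ℕ, i + ((t + 1 : ℕ) : ZMod N) = i + 1 + t := fun t => by
      push_cast; ring
    have hcount : #{t : Fin (m + 1) | τ (i + (t : ℕ)) = j}
        = #{t : Fin m | τ (i + 1 + (t : ℕ)) = j} + if τ i = j then 1 else 0 := by
      rw [Fin.card_filter_univ_succ', add_comm]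
      simp only [Fin.val_zero, Fin.val_succ, hshift, Nat.cast_zero, add_zero]
    rw [hcount, hshift]
    by_cases hj : τ i = j
    · have hflip : x (i + 1) j ≠ x i j := (hτ i j).2 hj.symm
      rw [if_pos hj, Nat.odd_add_one, ← ih (i + 1)]
      revert hflip
      cases x i j <;> cases x (i + 1) j <;> cases x (i + 1 + m) j <;> simp
    · have hkeep : x (i + 1) j = x i j := not_not.1 (mt (hτ i j).1 (Ne.symm hj))
      rw [if_neg hj, add_zero, ← ih (i + 1), hkeep]

lemma IsTransitionSeq.hammingDist_eq_segDelta {d N : ℕ} {x : ZMod N → Fin d → Bool}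
    {τ : ZMod N → Fin d} (hτ : IsTransitionSeq x τ) (i : ZMod N) (m : ℕ) :
    hammingDist (x i) (x (i + m)) = segDelta τ i m := by
  rw [hammingDist, segDelta]
  congr 1
  exact filter_congr fun j _ => ne_comm.trans (hτ.ne_iff_odd_card i j m)

def IsRepeated {α : Type*} (f : ℕ → α) (m : ℕ) (v : α) : Prop :=
  ∃ a < m, ∃ b < m, a ≠ b ∧ f a = v ∧ f b = v

lemma IsRepeated.two_le_card {α : Type*} [DecidableEq α] {f : ℕ → α} {m : ℕ} {v : α}
    (h : IsRepeated f m v) : 2 ≤ #{t : Fin m | f t = v} := by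
  obtain ⟨a, ha, b, hb, hab, hfa, hfb⟩ := h
  calc 2 = #{(⟨a, ha⟩ : Fin m), ⟨b, hb⟩} := (card_pair (by simpa using hab)).symm
    _ ≤ _ := card_le_card fun t ht => by
      rcases mem_insert.1 ht with rfl | ht
      · simpa
      · rw [mem_singleton.1 ht]; simpa

lemma segDelta_add_two_mul_card_le {d N : ℕ} (τ : ZMod N → Fin d) (s : ZMod N) (m : ℕ)
    (S : Finset (Fin d)) (hS : ∀ v ∈ S, IsRepeated (fun t : ℕ => τ (s + t)) m v) :
    segDelta τ s m + 2 * #S ≤ m := by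
  set c : Fin d → ℕ := fun v => #{t : Fin m | τ (s + (t : ℕ)) = v}
  have hsum : ∑ v, c v = m := by
    simpa using (card_eq_sum_card_fiberwise (f := fun t : Fin m => τ (s + (t : ℕ)))
      (s := univ) (t := univ) fun _ _ => mem_univ _).symm
  have hterm : ∀ v, (if Odd (c v) then 1 else 0) + (if v ∈ S then 2 else 0) ≤ c v := by
    intro v
    have h2 : v ∈ S → 2 ≤ c v := fun hv => (hS v hv).two_le_card
    split_ifs with hodd hv <;> grind
  calc segDelta τ s m + 2 * #S
      = ∑ v, ((if Odd (c v) then 1 else 0) + (if v ∈ S then 2 else 0)) := by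
        rw [sum_add_distrib, ← card_filter, sum_ite_mem, univ_inter, sum_const, smul_eq_mul,
          mul_comm]
        rfl
    _ ≤ m := hsum ▸ sum_le_sum fun v _ => hterm v

lemma cycDist_self_add_natCast {N : ℕ} (s : ZMod N) {m : ℕ} (hm : 2 * m ≤ N) :
    cycDist s (s + m) = m := by
  rcases Nat.eq_zero_or_pos m with rfl | hm0
  · simp [cycDist]
  have : NeZero N := ⟨by omega⟩
  have hval : (m : ZMod N).val = m := ZMod.val_cast_of_lt (by omega)
  have hbwd : (s - (s + m)).val = N - m := by
    rw [sub_add_cancel_left, ZMod.neg_val', hval, Nat.mod_eq_of_lt (by omega)]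
  rw [cycDist, add_sub_cancel_left, hval, hbwd]
  omega

lemma IsCircuitCode.min_le_segDelta {d k N : ℕ} {x : ZMod N → Fin d → Bool}
    (hx : IsCircuitCode d k N x) {τ : ZMod N → Fin d} (hτ : IsTransitionSeq x τ)
    (s : ZMod N) {m : ℕ} (hm : 2 * m ≤ N) : min m k ≤ segDelta τ s m := by
  calc min m k = min (cycDist s (s + m)) k := by rw [cycDist_self_add_natCast s hm]
    _ ≤ (hypercube d).dist (x s) (x (s + m)) := hx.spread _ _
    _ ≤ hammingDist (x s) (x (s + m)) := hypercube_dist_le_hammingDist _ _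
    _ = segDelta τ s m := hτ.hammingDist_eq_segDelta s m

def SpreadBound {α : Type*} (g : ℕ → α) (k N : ℕ) : Prop :=
  ∀ (s m : ℕ) (S : Finset α), 2 * m ≤ N →
    (∀ v ∈ S, IsRepeated (fun t => g (s + t)) m v) → min m k + 2 * #S ≤ m

lemma IsCircuitCode.spreadBound {d k N : ℕ} {x : ZMod N → Fin d → Bool}
    (hx : IsCircuitCode d k N x) {τ : ZMod N → Fin d} (hτ : IsTransitionSeq x τ) :
    SpreadBound (fun n : ℕ => τ n) k N := by
  intro s m S hm hS
  simp only [Nat.cast_add] at hS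
  have := segDelta_add_two_mul_card_le τ s m S hS
  have := hx.min_le_segDelta hτ s hm
  omega

lemma isRepeated_of_eq {α : Type*} {g : ℕ → α} {s m p q : ℕ} {v : α} (hsp : s ≤ p)
    (hpq : p < q) (hqm : q < s + m) (hp : g p = v) (hq : g q = v) :
    IsRepeated (fun t => g (s + t)) m v :=
  ⟨p - s, by omega, q - s, by omega, by omega, by simpa [Nat.add_sub_cancel' hsp],
    by simpa [Nat.add_sub_cancel' (by omega : s ≤ q)]⟩

namespace SpreadBound

variable {α : Type*} {g : ℕ → α} {k N : ℕ}

lemma ne_of_lt_of_le_add (h : SpreadBound g k N) (hN : 2 * (k + 1) ≤ N) {p q : ℕ}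
    (hpq : p < q) (hqp : q ≤ p + k) : g p ≠ g q := by
  intro hg
  have := h p (q - p + 1) {g p} (by omega)
    (by simpa using isRepeated_of_eq le_rfl hpq (by omega) rfl hg.symm)
  rw [card_singleton] at this
  omega

lemma injOn_window (h : SpreadBound g k N) (hN : 2 * (k + 1) ≤ N) (s : ℕ)
    (h0 : g s ≠ g (s + k + 1)) (h1 : g (s + 1) ≠ g (s + k + 2)) (h2 : g s ≠ g (s + k + 2)) :
    Set.InjOn (fun a => g (s + a)) (Set.Iio (k + 3)) := by
  have key : ∀ a b, a < b → b < k + 3 → g (s + a) ≠ g (s + b) := by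
    intro a b hab hb
    by_cases hnear : b ≤ a + k
    · exact h.ne_of_lt_of_le_add hN (by omega) (by omega)
    obtain ⟨rfl, rfl⟩ | ⟨rfl, rfl⟩ | ⟨rfl, rfl⟩ :
        (a = 0 ∧ b = k + 1) ∨ (a = 1 ∧ b = k + 2) ∨ (a = 0 ∧ b = k + 2) := by omega
    · simpa [add_assoc] using h0
    · simpa [add_assoc] using h1
    · simpa [add_assoc] using h2
  intro a ha b hb hab
  rcases lt_trichotomy a b with hlt | rfl | hgt
  · exact absurd hab (key a b hlt hb)
  · rfl
  · exact absurd hab.symm (key b a hgt ha)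

variable [DecidableEq α]

lemma eq_of_isRepeated (h : SpreadBound g k N) (hN : 2 * (k + 3) ≤ N) {s : ℕ} {u v : α}
    (hu : IsRepeated (fun t => g (s + t)) (k + 3) u)
    (hv : IsRepeated (fun t => g (s + t)) (k + 3) v) : u = v := by
  by_contra huv
  have := h s (k + 3) {u, v} hN (by simp [hu, hv])
  rw [card_pair huv] at this
  omega

lemma eq_or_eq_or_eq_of_isRepeated (h : SpreadBound g k N) (hN : 2 * (k + 5) ≤ N) {s : ℕ}
    {u v w : α} (hu : IsRepeated (fun t => g (s + t)) (k + 5) u)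
    (hv : IsRepeated (fun t => g (s + t)) (k + 5) v)
    (hw : IsRepeated (fun t => g (s + t)) (k + 5) w) : u = v ∨ u = w ∨ v = w := by
  by_contra! hne
  have := h s (k + 5) {u, v, w} hN (by simp [hu, hv, hw])
  rw [card_eq_three.2 ⟨u, v, w, hne.1, hne.2.1, hne.2.2, rfl⟩] at this
  omega

theorem injOn_segment_cases (h : SpreadBound g k N) (hk : 3 ≤ k) (hN : 2 * (k + 5) ≤ N)
    (hper : ∀ p, g (p + (2 * k + 3)) = g p) (hβ₂ : g (k + 4) = g 2) :
    Set.InjOn (fun a => g (3 + a)) (Set.Iio (k + 3)) ∨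
      (g (k + 5) = g 4 ∧ Set.InjOn (fun a => g (k + 6 + a)) (Set.Iio (k + 3))) := by
  have near : ∀ {p q}, p < q → q ≤ p + k → g p ≠ g q := h.ne_of_lt_of_le_add (by omega)
  have per : ∀ {p q}, q = p + (2 * k + 3) → g q = g p := fun hq => hq ▸ hper _
  have hβ₃ : g (k + 5) ≠ g 3 := fun h3 =>
    near (p := 2) (q := 3) (by omega) (by omega) <| h.eq_of_isRepeated (by omega) (s := k + 4)
      (isRepeated_of_eq (p := k + 4) (q := 2 * k + 5) (by omega) (by omega) (by omega) hβ₂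
        (per (by omega)))
      (isRepeated_of_eq (p := k + 5) (q := 2 * k + 6) (by omega) (by omega) (by omega) h3
        (per (by omega)))
  by_cases h4 : g (k + 5) = g 4
  · refine .inr ⟨h4, h.injOn_window (by omega) (k + 6) ?_ ?_ ?_⟩
    · rw [per (p := 4) (q := k + 6 + k + 1) (by omega), ← h4]
      exact Ne.symm (near (by omega) (by omega))
    · intro h5
      rcases h.eq_or_eq_or_eq_of_isRepeated (by omega) (s := k + 4)
        (isRepeated_of_eq (p := k + 4) (q := 2 * k + 5) (by omega) (by omega) (by omega) hβ₂
          (per (by omega)))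
        (isRepeated_of_eq (p := k + 5) (q := 2 * k + 7) (by omega) (by omega) (by omega) h4
          (per (by omega)))
        (isRepeated_of_eq (p := k + 7) (q := 2 * k + 8) (by omega) (by omega) (by omega)
          (h5.trans (per (p := 5) (by omega))) (per (by omega))) with h | h | h
      all_goals exact near (by omega) (by omega) h
    · intro h5
      exact near (p := 4) (q := 5) (by omega) (by omega) <| h.eq_of_isRepeated (by omega) (s := 4)
        (isRepeated_of_eq (p := 4) (q := k + 5) le_rfl (by omega) (by omega) rfl h4)
        (isRepeated_of_eq (p := 5) (q := k + 6) (by omega) (by omega) (by omega) rfl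
          (h5.trans (per (p := 5) (by omega))))
  · refine .inl (h.injOn_window (by omega) 3 ?_ ?_ ?_)
    · rw [show 3 + k + 1 = k + 4 by omega, hβ₂]
      exact Ne.symm (near (by omega) (by omega))
    · rw [show 3 + 1 = 4 by rfl, show 3 + k + 2 = k + 5 by omega]
      exact Ne.symm h4
    · rw [show 3 + k + 2 = k + 5 by omega]
      exact Ne.symm hβ₃

end SpreadBound

lemma isBitRun_natCast_of_injOn {d N : ℕ} {τ : ZMod N → Fin d} {s m : ℕ}
    (h : Set.InjOn (fun a : ℕ => τ ((s + a : ℕ) : ZMod N)) (Set.Iio m)) :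
    IsBitRun τ (s : ZMod N) m :=
  fun a b hab => Fin.ext (h a.isLt b.isLt (by simpa only [Nat.cast_add] using hab))

theorem stmt_16_general (k d : ℕ) (hk4 : 4 ≤ k)
    (x : ZMod (4 * k + 6) → Fin d → Bool)
    (hx : IsCircuitCode d k (4 * k + 6) x)
    (τ : ZMod (4 * k + 6) → Fin d) (hτ : IsTransitionSeq x τ)
    (hsym : ∀ i : ZMod (4 * k + 6), τ (i + ((2 * k + 3 : ℕ) : ZMod (4 * k + 6))) = τ i)
    (hω₁ : ∀ i : ℕ, i ≤ k + 1 → (τ ((i : ℕ) : ZMod (4 * k + 6))).val = i)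
    (hβ₂ : (τ ((k + 4 : ℕ) : ZMod (4 * k + 6))).val = 2) :
    IsBitRun τ ((3 : ℕ) : ZMod (4 * k + 6)) (k + 3) ∨
      ((τ ((k + 5 : ℕ) : ZMod (4 * k + 6))).val = 4 ∧
        IsBitRun τ ((k + 6 : ℕ) : ZMod (4 * k + 6)) (k + 3)) := by
  have hper : ∀ p : ℕ, τ ((p + (2 * k + 3) : ℕ) : ZMod (4 * k + 6)) = τ p := fun p => by
    rw [Nat.cast_add p, hsym]
  have hβ₂' : τ ((k + 4 : ℕ) : ZMod (4 * k + 6)) = τ ((2 : ℕ) : ZMod (4 * k + 6)) :=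
    Fin.ext (by rw [hβ₂, hω₁ 2 (by omega)])
  rcases (hx.spreadBound hτ).injOn_segment_cases (by omega) (by omega) hper hβ₂' with h | ⟨h4, h⟩
  · exact .inl (isBitRun_natCast_of_injOn h)
  · exact .inr ⟨by rw [h4, hω₁ 4 (by omega)], isBitRun_natCast_of_injOn h⟩

/-- For even `k ≥ 4`, `d = (3k+4)/2`, and a symmetric `(d,k)` circuit code of length
`4k+6` whose transition sequence has the form `(ω₁, x, ω₂, ω₁, x, ω₂)` with
`ω₁ = (1,...,k+2)` (coordinates modeled 0-based as `Fin d`): if `x ∈ {1,2}` (0-based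
value `0` or `1`) and `β₂ = 3` (0-based value `2`, at position `k+4`), then either the
segment `(4,...,k+2,x,β₁,β₂,β₃)` (starting at position `3`, of length `k+3`) is a
bit run, or `β₃ = 5` (0-based value `4`) and the segment `(β₄,...,β_k,1,2,3,4,5,6)`
(starting at position `k+6`, of length `k+3`) is a bit run. -/
theorem stmt_16 (k d : ℕ) (hk : Even k) (hk4 : 4 ≤ k) (hd : 2 * d = 3 * k + 4)
    (x : ZMod (4 * k + 6) → Fin d → Bool)
    (hx : IsCircuitCode d k (4 * k + 6) x)
    (τ : ZMod (4 * k + 6) → Fin d) (hτ : IsTransitionSeq x τ)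
    (hsym : ∀ i : ZMod (4 * k + 6), τ (i + ((2 * k + 3 : ℕ) : ZMod (4 * k + 6))) = τ i)
    (hω₁ : ∀ i : ℕ, i ≤ k + 1 → (τ ((i : ℕ) : ZMod (4 * k + 6))).val = i)
    (hx12 : (τ ((k + 2 : ℕ) : ZMod (4 * k + 6))).val = 0 ∨
            (τ ((k + 2 : ℕ) : ZMod (4 * k + 6))).val = 1)
    (hβ₂ : (τ ((k + 4 : ℕ) : ZMod (4 * k + 6))).val = 2) :
    IsBitRun τ ((3 : ℕ) : ZMod (4 * k + 6)) (k + 3) ∨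
      ((τ ((k + 5 : ℕ) : ZMod (4 * k + 6))).val = 4 ∧
        IsBitRun τ ((k + 6 : ℕ) : ZMod (4 * k + 6)) (k + 3)) :=
  stmt_16_general k d hk4 x hx τ hτ hsym hω₁ hβ₂
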